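/- Let u, B : ℝ × ℝ³ → ℝ³, ρ, p, T, S : ℝ × ℝ³ → ℝ be smooth with ρ > 0, satisfying the MHD momentum equation ρ(∂u/∂t + (u·∇)u) = −∇p + J×B with J = (∇×B)/μ₀, the continuity equation ∂ρ/∂t + ∇·(ρu) = 0, entropy advection ∂S/∂t + u·∇S = 0, and the thermodynamic identity T∇S = ∇h − (1/ρ)∇p for a smooth enthalpy h. Let ψ be a smooth scalar advected with the flow. Then ∂/∂t(ω·∇ψ) + ∇·[(ω·∇ψ)u − (T∇S + (J×B)/ρ)×∇ψ] = 0, where ω = ∇×u. -/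

import Mathlib

noncomputable section

open scoped BigOperators

abbrev V3 := Fin 3 → ℝ

/-- partial derivative of a scalar field in direction `i` -/
def pd (f : V3 → ℝ) (i : Fin 3) (x : V3) : ℝ := fderiv ℝ f x (Pi.single i 1)

/-- gradient -/
def grad (f : V3 → ℝ) (x : V3) : V3 := fun i => pd f i x

/-- divergence -/
def div3 (F : V3 → V3) (x : V3) : ℝ := ∑ i, pd (fun y => F y i) i x

/-- curl -/
def curl3 (F : V3 → V3) (x : V3) : V3 :=
  ![pd (fun y => F y 2) 1 x - pd (fun y => F y 1) 2 x,
    pd (fun y => F y 0) 2 x - pd (fun y => F y 2) 0 x,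
    pd (fun y => F y 1) 0 x - pd (fun y => F y 0) 1 x]

/-- cross product in ℝ³ -/
def cross (a b : V3) : V3 :=
  ![a 1 * b 2 - a 2 * b 1, a 2 * b 0 - a 0 * b 2, a 0 * b 1 - a 1 * b 0]

/-- dot product in ℝ³ -/
def dot (a b : V3) : ℝ := ∑ i, a i * b i

-- smoothness of fderiv applied to fixed vector
lemma contDiff_fderiv_apply {E : Type*} [NormedAddCommGroup E] [NormedSpace ℝ E]
    {f : E → ℝ} (hf : ContDiff ℝ (⊤ : ℕ∞) f) (v : E) :
    ContDiff ℝ (⊤ : ℕ∞) (fun x => fderiv ℝ f x v) :=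
  (hf.fderiv_right ((by simp))).clm_apply contDiff_const

lemma contDiff_pd' {f : V3 → ℝ} (hf : ContDiff ℝ (⊤ : ℕ∞) f) (i : Fin 3) :
    ContDiff ℝ (⊤ : ℕ∞) (fun y => pd f i y) :=
  (hf.fderiv_right ((by simp))).clm_apply contDiff_const

lemma diffat_pd {f : V3 → ℝ} (i : Fin 3) (x : V3) (hf : ContDiff ℝ (⊤ : ℕ∞) f) :
    DifferentiableAt ℝ (fun y => pd f i y) x :=
  ((contDiff_pd' hf i).differentiable (by simp)) x

lemma pd_add {f g : V3 → ℝ} {x : V3} (hf : DifferentiableAt ℝ f x)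
    (hg : DifferentiableAt ℝ g x) (i : Fin 3) :
    pd (fun y => f y + g y) i x = pd f i x + pd g i x := by
  unfold pd; rw [fderiv_fun_add hf hg]; rfl
lemma pd_sub {f g : V3 → ℝ} {x : V3} (hf : DifferentiableAt ℝ f x)
    (hg : DifferentiableAt ℝ g x) (i : Fin 3) :
    pd (fun y => f y - g y) i x = pd f i x - pd g i x := by
  unfold pd; rw [fderiv_fun_sub hf hg]; rfl
lemma pd_mul {f g : V3 → ℝ} {x : V3} (hf : DifferentiableAt ℝ f x)
    (hg : DifferentiableAt ℝ g x) (i : Fin 3) :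
    pd (fun y => f y * g y) i x = pd f i x * g x + f x * pd g i x := by
  unfold pd; rw [fderiv_fun_mul hf hg]; simp [mul_comm]; ring
lemma fderiv2_symm {E : Type*} [NormedAddCommGroup E] [NormedSpace ℝ E]
    {f : E → ℝ} (hf : ContDiff ℝ (⊤ : ℕ∞) f) (x v w : E) :
    fderiv ℝ (fun y => fderiv ℝ f y v) x w = fderiv ℝ (fun y => fderiv ℝ f y w) x v := by
  have hdf : DifferentiableAt ℝ (fderiv ℝ f) x :=
    ((hf.fderiv_right (m := (⊤ : ℕ∞)) (by simp)).differentiable (by simp)) x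
  have h1 : ∀ u : E, fderiv ℝ (fun y => fderiv ℝ f y u) x
      = (fderiv ℝ (fderiv ℝ f) x).flip u := by
    intro u
    have := (hdf.hasFDerivAt.clm_apply (hasFDerivAt_const u x))
    simpa using this.fderiv
  rw [h1 v, h1 w]
  have hsymm := (hf.contDiffAt (x := x)).isSymmSndFDerivAt (by norm_num; exact WithTop.coe_le_coe.mpr le_top)
  simp only [ContinuousLinearMap.flip_apply]
  exact (hsymm w v).symm ▸ (hsymm v w) ▸ rfl
lemma pd_comm {f : V3 → ℝ} (hf : ContDiff ℝ (⊤ : ℕ∞) f) (i j : Fin 3) (x : V3) :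
    pd (pd f i) j x = pd (pd f j) i x := by
  show fderiv ℝ (fun y => fderiv ℝ f y (Pi.single i 1)) x (Pi.single j 1)
     = fderiv ℝ (fun y => fderiv ℝ f y (Pi.single j 1)) x (Pi.single i 1)
  exact fderiv2_symm hf x _ _

-- slices
lemma contDiff_slice {f : ℝ × V3 → ℝ} (hf : ContDiff ℝ (⊤ : ℕ∞) f) (t : ℝ) :
    ContDiff ℝ (⊤ : ℕ∞) (fun y => f (t, y)) :=
  hf.comp (contDiff_const.prodMk contDiff_id)

lemma hasFDerivAt_mk_right (t : ℝ) (x : V3) :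
    HasFDerivAt (fun y : V3 => ((t, y) : ℝ × V3))
      ((0 : V3 →L[ℝ] ℝ).prod (ContinuousLinearMap.id ℝ V3)) x :=
  (hasFDerivAt_const t x).prodMk (hasFDerivAt_id x)

lemma hasFDerivAt_mk_left (t : ℝ) (x : V3) :
    HasFDerivAt (fun s : ℝ => ((s, x) : ℝ × V3))
      ((ContinuousLinearMap.id ℝ ℝ).prod (0 : ℝ →L[ℝ] V3)) t :=
  (hasFDerivAt_id t).prodMk (hasFDerivAt_const x t)

lemma pd_slice {f : ℝ × V3 → ℝ} (hf : ContDiff ℝ (⊤ : ℕ∞) f) (t : ℝ) (x : V3) (i : Fin 3) :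
    pd (fun y => f (t, y)) i x = fderiv ℝ f (t, x) (0, Pi.single i 1) := by
  have h := ((hf.differentiable (by simp) (t, x)).hasFDerivAt).comp x (hasFDerivAt_mk_right t x)
  unfold pd
  rw [show (fun y => f (t, y)) = f ∘ (fun y => (t, y)) from rfl, h.fderiv]
  rfl

lemma deriv_slice {f : ℝ × V3 → ℝ} (hf : ContDiff ℝ (⊤ : ℕ∞) f) (t : ℝ) (x : V3) :
    deriv (fun s => f (s, x)) t = fderiv ℝ f (t, x) (1, 0) := by
  have h := ((hf.differentiable (by simp) (t, x)).hasFDerivAt).comp t (hasFDerivAt_mk_left t x)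
  rw [show (fun s => f (s, x)) = f ∘ (fun s => (s, x)) from rfl, h.hasDerivAt.deriv]
  rfl

-- the time/space derivative swap, in HasDerivAt form
lemma hasDerivAt_pd_swap {f : ℝ × V3 → ℝ} (hf : ContDiff ℝ (⊤ : ℕ∞) f) (t : ℝ) (x : V3) (i : Fin 3) :
    HasDerivAt (fun s => pd (fun y => f (s, y)) i x)
      (pd (fun y => deriv (fun s => f (s, y)) t) i x) t := by
  have hg : ContDiff ℝ (⊤ : ℕ∞) (fun z => fderiv ℝ f z (0, Pi.single i 1)) :=
    contDiff_fderiv_apply hf _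
  have h1 : (fun s => pd (fun y => f (s, y)) i x)
      = fun s => (fun z => fderiv ℝ f z (0, Pi.single i 1)) (s, x) := by
    funext s; exact pd_slice hf s x i
  have h2 : pd (fun y => deriv (fun s => f (s, y)) t) i x
      = fderiv ℝ (fun z => fderiv ℝ f z (1, 0)) (t, x) (0, Pi.single i 1) := by
    have h2a : (fun y => deriv (fun s => f (s, y)) t) = fun y => (fun z => fderiv ℝ f z ((1 : ℝ), (0 : V3))) (t, y) := by
      funext y; exact deriv_slice hf t y
    rw [h2a, pd_slice (contDiff_fderiv_apply hf _) t x i]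
  rw [h1, h2, ← fderiv2_symm hf (t, x) _ _]
  have := ((hg.differentiable (by simp) (t, x)).hasFDerivAt).comp t (hasFDerivAt_mk_left t x)
  simpa [Function.comp_def] using this.hasDerivAt


lemma pd_neg {f : V3 → ℝ} {x : V3} (i : Fin 3) :
    pd (fun y => -f y) i x = -pd f i x := by
  unfold pd; rw [fderiv_fun_neg]; rfl

set_option maxHeartbeats 4000000 in
lemma key (U G : V3 → V3) (f g : V3 → ℝ)
    (hU : ∀ k, ContDiff ℝ (⊤ : ℕ∞) (fun y => U y k)) (hG : ∀ k, ContDiff ℝ (⊤ : ℕ∞) (fun y => G y k))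
    (hf : ContDiff ℝ (⊤ : ℕ∞) f) (hg : ContDiff ℝ (⊤ : ℕ∞) g) (x : V3) :
    dot (curl3 G x) (grad f x)
     - dot (curl3 U x) (grad (fun y => dot (U y) (grad f y)) x)
     + div3 (fun y => fun j => dot (curl3 U y) (grad f y) * U y j
         - cross (fun i => G y i + dot (U y) (grad (fun z => U z i) y) + grad g y i)
             (grad f y) j) x = 0 := by
  have hU0 := hU 0; have hU1 := hU 1; have hU2 := hU 2
  have hG0 := hG 0; have hG1 := hG 1; have hG2 := hG 2
  simp only [div3, dot, grad, curl3, cross, Fin.sum_univ_three, Matrix.cons_val_zero,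
    Matrix.cons_val_one, Matrix.head_cons, Matrix.cons_val_two, Matrix.tail_cons]
  simp (disch := with_unfolding_all (repeat' first
      | apply DifferentiableAt.sub
      | apply DifferentiableAt.add
      | apply DifferentiableAt.mul
      | apply DifferentiableAt.neg
      | apply diffat_pd
      | exact (hf.differentiable (by simp)).differentiableAt
      | exact (hg.differentiable (by simp)).differentiableAt
      | exact (hU0.differentiable (by simp)).differentiableAt
      | exact (hU1.differentiable (by simp)).differentiableAt
      | exact (hU2.differentiable (by simp)).differentiableAt
      | exact (hG0.differentiable (by simp)).differentiableAt
      | exact (hG1.differentiable (by simp)).differentiableAt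
      | exact (hG2.differentiable (by simp)).differentiableAt
      | assumption)) only [pd_add, pd_sub, pd_mul]
  simp only [pd_comm hf 1 0 x, pd_comm hf 2 0 x, pd_comm hf 2 1 x,
    pd_comm hg 1 0 x, pd_comm hg 2 0 x, pd_comm hg 2 1 x,
    pd_comm hU0 1 0 x, pd_comm hU0 2 0 x, pd_comm hU0 2 1 x,
    pd_comm hU1 1 0 x, pd_comm hU1 2 0 x, pd_comm hU1 2 1 x,
    pd_comm hU2 1 0 x, pd_comm hU2 2 0 x, pd_comm hU2 2 1 x]
  ring


set_option maxHeartbeats 4000000 in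
theorem mhd_generalized_potential_vorticity (μ₀ : ℝ) (hμ₀ : 0 < μ₀)
    (u B : ℝ × V3 → V3) (ρ p T S h ψ : ℝ × V3 → ℝ)
    (hu : ContDiff ℝ (⊤ : ℕ∞) u) (hB : ContDiff ℝ (⊤ : ℕ∞) B) (hρ : ContDiff ℝ (⊤ : ℕ∞) ρ)
    (hp : ContDiff ℝ (⊤ : ℕ∞) p) (hT : ContDiff ℝ (⊤ : ℕ∞) T) (hS : ContDiff ℝ (⊤ : ℕ∞) S)
    (hh : ContDiff ℝ (⊤ : ℕ∞) h) (hψ : ContDiff ℝ (⊤ : ℕ∞) ψ)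
    (hρpos : ∀ t x, 0 < ρ (t, x))
    (hmom : ∀ t x i, ρ (t, x) * (deriv (fun s => u (s, x) i) t
          + dot (u (t, x)) (grad (fun y => u (t, y) i) x))
        = - grad (fun y => p (t, y)) x i
          + cross (μ₀⁻¹ • curl3 (fun y => B (t, y)) x) (B (t, x)) i)
    (hcont : ∀ t x, deriv (fun s => ρ (s, x)) t
        + div3 (fun y => ρ (t, y) • u (t, y)) x = 0)
    (hentropy : ∀ t x, deriv (fun s => S (s, x)) t
        + dot (u (t, x)) (grad (fun y => S (t, y)) x) = 0)
    (hthermo : ∀ t x i, T (t, x) * grad (fun y => S (t, y)) x i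
        = grad (fun y => h (t, y)) x i
          - (ρ (t, x))⁻¹ * grad (fun y => p (t, y)) x i)
    (hadv : ∀ t x, deriv (fun s => ψ (s, x)) t
        + dot (u (t, x)) (grad (fun y => ψ (t, y)) x) = 0) :
    ∀ t x,
      deriv (fun s => dot (curl3 (fun y => u (s, y)) x)
          (grad (fun y => ψ (s, y)) x)) t
        + div3 (fun y =>
            dot (curl3 (fun z => u (t, z)) y) (grad (fun z => ψ (t, z)) y) • u (t, y)
              - cross (T (t, y) • grad (fun z => S (t, z)) y
                  + (ρ (t, y))⁻¹ • cross (μ₀⁻¹ • curl3 (fun z => B (t, z)) y) (B (t, y)))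
                (grad (fun z => ψ (t, z)) y)) x = 0 := by
  intro t x
  have hid : ∀ (k : Fin 3), ContDiff ℝ (⊤ : ℕ∞) (fun z : ℝ × V3 => u z k) := fun k => contDiff_pi.mp hu k
  have hψt : ContDiff ℝ (⊤ : ℕ∞) (fun y => ψ (t, y)) := contDiff_slice hψ t
  have hht : ContDiff ℝ (⊤ : ℕ∞) (fun y => h (t, y)) := contDiff_slice hh t
  have hUt : ∀ k : Fin 3, ContDiff ℝ (⊤ : ℕ∞) (fun y => u (t, y) k) := fun k => contDiff_slice (hid k) t
  have hGt : ∀ k : Fin 3, ContDiff ℝ (⊤ : ℕ∞) (fun y => deriv (fun s => u (s, y) k) t) := by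
    intro k
    have e : (fun y => deriv (fun s => u (s, y) k) t)
        = fun y => fderiv ℝ (fun z : ℝ × V3 => u z k) (t, y) (1, 0) := by
      funext y; exact deriv_slice (hid k) t y
    rw [e]
    exact (contDiff_fderiv_apply (hid k) _).comp (contDiff_const.prodMk contDiff_id)
  have epsi : (fun y => deriv (fun s => ψ (s, y)) t)
      = fun y => -(u (t, y) 0 * pd (fun z => ψ (t, z)) 0 y + u (t, y) 1 * pd (fun z => ψ (t, z)) 1 y
          + u (t, y) 2 * pd (fun z => ψ (t, z)) 2 y) := by
    funext y
    have hv := hadv t y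
    simp only [dot, grad, Fin.sum_univ_three] at hv
    linarith
  have Aψ : ∀ i : Fin 3, HasDerivAt (fun s => pd (fun y => ψ (s, y)) i x)
      (-(pd (fun y => u (t, y) 0 * pd (fun z => ψ (t, z)) 0 y + u (t, y) 1 * pd (fun z => ψ (t, z)) 1 y
          + u (t, y) 2 * pd (fun z => ψ (t, z)) 2 y) i x)) t := by
    intro i
    have A := hasDerivAt_pd_swap hψ t x i
    rw [epsi] at A
    rwa [pd_neg] at A
  have Au : ∀ (k i : Fin 3), HasDerivAt (fun s => pd (fun y => u (s, y) k) i x)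
      (pd (fun y => deriv (fun s => u (s, y) k) t) i x) t := fun k i => hasDerivAt_pd_swap (hid k) t x i
  have hder := ((((Au 2 1).fun_sub (Au 1 2)).fun_mul (Aψ 0)).fun_add
      (((Au 0 2).fun_sub (Au 2 0)).fun_mul (Aψ 1))).fun_add ((((Au 1 0).fun_sub (Au 0 1)).fun_mul (Aψ 2)))
  have K := key (fun y => u (t, y)) (fun y => fun k => deriv (fun s => u (s, y) k) t)
      (fun y => ψ (t, y)) (fun y => h (t, y)) hUt hGt hψt hht x
  have keyF : ∀ (y : V3) (a : Fin 3),
      T (t, y) * pd (fun z => S (t, z)) a y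
        + (ρ (t, y))⁻¹ * cross (μ₀⁻¹ • curl3 (fun z => B (t, z)) y) (B (t, y)) a
      = deriv (fun s => u (s, y) a) t
        + (u (t, y) 0 * pd (fun z => u (t, z) a) 0 y + u (t, y) 1 * pd (fun z => u (t, z) a) 1 y
            + u (t, y) 2 * pd (fun z => u (t, z) a) 2 y)
        + pd (fun z => h (t, z)) a y := by
    intro y a
    have h1 := hthermo t y a
    have h2 := hmom t y a
    have hρ : ρ (t, y) ≠ 0 := (hρpos t y).ne'
    simp only [grad, dot, Fin.sum_univ_three] at h1 h2
    have hX : cross (μ₀⁻¹ • curl3 (fun z => B (t, z)) y) (B (t, y)) a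
        = ρ (t, y) * (deriv (fun s => u (s, y) a) t
          + (u (t, y) 0 * pd (fun z => u (t, z) a) 0 y + u (t, y) 1 * pd (fun z => u (t, z) a) 1 y
            + u (t, y) 2 * pd (fun z => u (t, z) a) 2 y))
          + pd (fun z => p (t, z)) a y := by linarith
    rw [hX, h1]
    field_simp
    ring
  simp only [dot, grad, curl3, cross, div3, Fin.sum_univ_three, Matrix.cons_val_zero,
    Matrix.cons_val_one, Matrix.head_cons, Matrix.cons_val_two, Matrix.tail_cons,
    Pi.sub_apply, Pi.add_apply, Pi.smul_apply, smul_eq_mul] at K ⊢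
  rw [hder.deriv]
  have kF0 := fun y => keyF y 0
  have kF1 := fun y => keyF y 1
  have kF2 := fun y => keyF y 2
  simp only [cross, curl3, Pi.smul_apply, smul_eq_mul, Matrix.cons_val_zero, Matrix.cons_val_one,
    Matrix.head_cons, Matrix.cons_val_two, Matrix.tail_cons] at kF0 kF1 kF2
  have e0 : (fun y => ((pd (fun y => u (t, y) 2) 1 y - pd (fun y => u (t, y) 1) 2 y) * pd (fun z => ψ (t, z)) 0 y + (pd (fun y => u (t, y) 0) 2 y - pd (fun y => u (t, y) 2) 0 y) * pd (fun z => ψ (t, z)) 1 y + (pd (fun y => u (t, y) 1) 0 y - pd (fun y => u (t, y) 0) 1 y) * pd (fun z => ψ (t, z)) 2 y) * u (t, y) 0 - ((T (t, y) * pd (fun z => S (t, z)) 1 y + (ρ (t, y))⁻¹ * (μ₀⁻¹ * (pd (fun y => B (t, y) 1) 0 y - pd (fun y => B (t, y) 0) 1 y) * B (t, y) 0 - μ₀⁻¹ * (pd (fun y => B (t, y) 2) 1 y - pd (fun y => B (t, y) 1) 2 y) * B (t, y) 2)) * pd (fun z => ψ (t, z)) 2 y - (T (t, y) * pd (fun z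 => S (t, z)) 2 y + (ρ (t, y))⁻¹ * (μ₀⁻¹ * (pd (fun y => B (t, y) 2) 1 y - pd (fun y => B (t, y) 1) 2 y) * B (t, y) 1 - μ₀⁻¹ * (pd (fun y => B (t, y) 0) 2 y - pd (fun y => B (t, y) 2) 0 y) * B (t, y) 0)) * pd (fun z => ψ (t, z)) 1 y)) = (fun y => ((pd (fun y => u (t, y) 2) 1 y - pd (fun y => u (t, y) 1) 2 y) * pd (fun z => ψ (t, z)) 0 y + (pd (fun y => u (t, y) 0) 2 y - pd (fun y => u (t, y) 2) 0 y) * pd (fun z => ψ (t, z)) 1 y + (pd (fun y => u (t, y) 1) 0 y - pd (fun y => u (t, y) 0) 1 y) * pd (fun z => ψ (t, z)) 2 y) * u (t, y) 0 - ((deriv (fun s => u (s, y) 1) t + (u (t, y) 0 * pd (fun z => u (t, z) 1) 0 y + u (t, y) 1 * pd (fun z => u (t, z) 1) 1 y + u (t, y) 2 * pd (fun z => u (t, z) 1) 2 y) + pd (fun z => h (t, z)) 1 y) * pd (fun z => ψ (t, z)) 2 y - (deriv (fun s => u (s, y) 2) t + (u (t, y) 0 * pd (fun z => u (t, z) 2)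 0 y + u (t, y) 1 * pd (fun z => u (t, z) 2) 1 y + u (t, y) 2 * pd (fun z => u (t, z) 2) 2 y) + pd (fun z => h (t, z)) 2 y) * pd (fun z => ψ (t, z)) 1 y)) := by
    funext y
    linear_combination (pd (fun z => ψ (t, z)) 1 y) * kF2 y - (pd (fun z => ψ (t, z)) 2 y) * kF1 y
  have e1 : (fun y => ((pd (fun y => u (t, y) 2) 1 y - pd (fun y => u (t, y) 1) 2 y) * pd (fun z => ψ (t, z)) 0 y + (pd (fun y => u (t, y) 0) 2 y - pd (fun y => u (t, y) 2) 0 y) * pd (fun z => ψ (t, z)) 1 y + (pd (fun y => u (t, y) 1) 0 y - pd (fun y => u (t, y) 0) 1 y) * pd (fun z => ψ (t, z)) 2 y) * u (t, y) 1 - ((T (t, y) * pd (fun z => S (t, z)) 2 y + (ρ (t, y))⁻¹ * (μ₀⁻¹ * (pd (fun y => B (t, y) 2) 1 y - pd (fun y => B (t, y) 1) 2 y) * B (t, y) 1 - μ₀⁻¹ * (pd (fun y => B (t, y) 0) 2 y - pd (fun y => B (t, y) 2) 0 y) * B (t, y) 0)) * pd (fun z => ψ (t, z)) 0 y - (T (t,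 y) * pd (fun z => S (t, z)) 0 y + (ρ (t, y))⁻¹ * (μ₀⁻¹ * (pd (fun y => B (t, y) 0) 2 y - pd (fun y => B (t, y) 2) 0 y) * B (t, y) 2 - μ₀⁻¹ * (pd (fun y => B (t, y) 1) 0 y - pd (fun y => B (t, y) 0) 1 y) * B (t, y) 1)) * pd (fun z => ψ (t, z)) 2 y)) = (fun y => ((pd (fun y => u (t, y) 2) 1 y - pd (fun y => u (t, y) 1) 2 y) * pd (fun z => ψ (t, z)) 0 y + (pd (fun y => u (t, y) 0) 2 y - pd (fun y => u (t, y) 2) 0 y) * pd (fun z => ψ (t, z)) 1 y + (pd (fun y => u (t, y) 1) 0 y - pd (fun y => u (t, y) 0) 1 y) * pd (fun z => ψ (t, z)) 2 y) * u (t, y) 1 - ((deriv (fun s => u (s, y) 2) t + (u (t, y) 0 * pd (fun z => u (t, z) 2) 0 y + u (t, y) 1 * pd (fun z => u (t, z) 2) 1 y + u (t, y) 2 * pd (fun z => u (t, z) 2) 2 y) + pd (fun z => h (t, z)) 2 y) * pd (fun z => ψ (t, z)) 0 y - (deriv (fun s => u (s, y) 0) t + (u (t, y) 0 * pd (fun z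 => u (t, z) 0) 0 y + u (t, y) 1 * pd (fun z => u (t, z) 0) 1 y + u (t, y) 2 * pd (fun z => u (t, z) 0) 2 y) + pd (fun z => h (t, z)) 0 y) * pd (fun z => ψ (t, z)) 2 y)) := by
    funext y
    linear_combination (pd (fun z => ψ (t, z)) 2 y) * kF0 y - (pd (fun z => ψ (t, z)) 0 y) * kF2 y
  have e2 : (fun y => ((pd (fun y => u (t, y) 2) 1 y - pd (fun y => u (t, y) 1) 2 y) * pd (fun z => ψ (t, z)) 0 y + (pd (fun y => u (t, y) 0) 2 y - pd (fun y => u (t, y) 2) 0 y) * pd (fun z => ψ (t, z)) 1 y + (pd (fun y => u (t, y) 1) 0 y - pd (fun y => u (t, y) 0) 1 y) * pd (fun z => ψ (t, z)) 2 y) * u (t, y) 2 - ((T (t, y) * pd (fun z => S (t, z)) 0 y + (ρ (t, y))⁻¹ * (μ₀⁻¹ * (pd (fun y => B (t, y) 0) 2 y - pd (fun y => B (t, y) 2) 0 y) * B (t, y) 2 - μ₀⁻¹ * (pd (fun y => B (t, y) 1) 0 y - pd (fun y => B (t, y) 0) 1 y) * B (t, y) 1)) * pd (fun z => ψ (t,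 z)) 1 y - (T (t, y) * pd (fun z => S (t, z)) 1 y + (ρ (t, y))⁻¹ * (μ₀⁻¹ * (pd (fun y => B (t, y) 1) 0 y - pd (fun y => B (t, y) 0) 1 y) * B (t, y) 0 - μ₀⁻¹ * (pd (fun y => B (t, y) 2) 1 y - pd (fun y => B (t, y) 1) 2 y) * B (t, y) 2)) * pd (fun z => ψ (t, z)) 0 y)) = (fun y => ((pd (fun y => u (t, y) 2) 1 y - pd (fun y => u (t, y) 1) 2 y) * pd (fun z => ψ (t, z)) 0 y + (pd (fun y => u (t, y) 0) 2 y - pd (fun y => u (t, y) 2) 0 y) * pd (fun z => ψ (t, z)) 1 y + (pd (fun y => u (t, y) 1) 0 y - pd (fun y => u (t, y) 0) 1 y) * pd (fun z => ψ (t, z)) 2 y) * u (t, y) 2 - ((deriv (fun s => u (s, y) 0) t + (u (t, y) 0 * pd (fun z => u (t, z) 0) 0 y + u (t, y) 1 * pd (fun z => u (t, z) 0) 1 y + u (t, y) 2 * pd (fun z => u (t, z) 0) 2 y) + pd (fun z => h (t, z)) 0 y) * pd (fun z => ψ (t, z)) 1 y - (deriv (fun s => u (s, y) 1) t + (u (t,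 y) 0 * pd (fun z => u (t, z) 1) 0 y + u (t, y) 1 * pd (fun z => u (t, z) 1) 1 y + u (t, y) 2 * pd (fun z => u (t, z) 1) 2 y) + pd (fun z => h (t, z)) 1 y) * pd (fun z => ψ (t, z)) 0 y)) := by
    funext y
    linear_combination (pd (fun z => ψ (t, z)) 0 y) * kF1 y - (pd (fun z => ψ (t, z)) 1 y) * kF0 y
  rw [e0, e1, e2]
  linear_combination K
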